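/- arXiv:1806.04392 — 6 statements merged into one kernel-verified Lean document; each statement's English description precedes it below -/
import Mathlib

section
/- Let P be a finite lattice and let F₁, F₂ be two nonempty up-sets of a subset Q ⊆ P, each satisfying inf Fᵢ ≰ sup (Q \ Fᵢ). If inf F₁ = inf F₂ then F₁ = F₂. -/
/-- In a finite lattice `P`, two nonempty up-sets `F₁, F₂` of `Q ⊆ P`, each
satisfying `inf Fᵢ ≰ sup (Q \ Fᵢ)`, coincide as soon as their infima coincide. -/
theorem upset_eq_of_inf_eq
    {P : Type*} [Lattice P] [Fintype P] [DecidableEq P]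
    (Q F₁ F₂ : Finset P) (hFQ₁ : F₁ ⊆ Q) (hFQ₂ : F₂ ⊆ Q)
    (hup₁ : ∀ a ∈ F₁, ∀ b ∈ Q, a ≤ b → b ∈ F₁)
    (hup₂ : ∀ a ∈ F₂, ∀ b ∈ Q, a ≤ b → b ∈ F₂)
    (hne₁ : F₁.Nonempty) (hne₂ : F₂.Nonempty)
    (hne₁' : (Q \ F₁).Nonempty) (hne₂' : (Q \ F₂).Nonempty)
    (h₁ : ¬ F₁.inf' hne₁ id ≤ (Q \ F₁).sup' hne₁' id)
    (h₂ : ¬ F₂.inf' hne₂ id ≤ (Q \ F₂).sup' hne₂' id)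
    (hinf : F₁.inf' hne₁ id = F₂.inf' hne₂ id) :
    F₁ = F₂ := by
  ext x
  constructor
  · intro hx
    by_contra hx2
    have hxQ : x ∈ Q := hFQ₁ hx
    have hle : F₁.inf' hne₁ id ≤ x := Finset.inf'_le id hx
    have hle2 : x ≤ (Q \ F₂).sup' hne₂' id :=
      Finset.le_sup' id (Finset.mem_sdiff.mpr ⟨hxQ, hx2⟩)
    exact h₂ (hinf ▸ hle.trans hle2)
  · intro hx
    by_contra hx2
    have hxQ : x ∈ Q := hFQ₂ hx
    have hle : F₂.inf' hne₂ id ≤ x := Finset.inf'_le id hx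
    have hle2 : x ≤ (Q \ F₁).sup' hne₁' id :=
      Finset.le_sup' id (Finset.mem_sdiff.mpr ⟨hxQ, hx2⟩)
    exact h₁ (hinf ▸ hle.trans hle2)
end

section
/- Let L be a finite set with at least 2 elements, and for each partition ξ of L let D(ξ) denote the set of ξ-uncorrelated states. Then for partitions υ and ξ, υ refines ξ if and only if D(υ) ⊆ D(ξ). (Abstract version: the map from the refinement lattice of partitions to state sets via tensor-product structure is an order embedding.) -/
/-!
If `υ ≤ ξ`, grouping the factors of a `υ`-product state by the blocks of `ξ` writes it as a
`ξ`-product of positive semidefinite matrices, and these rescale to states because their traces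
multiply to `1`.

Conversely, suppose a block `Y` of `υ` meets a block `X` of `ξ` and its complement. Fix two
configurations `x₀`, `x₁` differing at every site, and take the `υ`-product of the classical states
on the blocks that are `x₀` or `x₁` with probability `1/2` each. The diagonal support of a
`ξ`-product state contains, with any two configurations, every configuration glued from them
block by block of `ξ`. So if this state were `ξ`-uncorrelated, the configuration equal to `x₁` on
`X` and to `x₀` elsewhere would carry positive weight; but on `Y` it is neither `x₀` nor `x₁`.
-/

open scoped BigOperators ComplexOrder

variable {n : ℕ} {d : Fin n → ℕ}

/-- A density operator `ρ` on `⊗_{i} ℂ^{d i}` is `ξ`-uncorrelated for a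
partition `ξ` of `{1,…,n}` if it is a tensor product of density operators of
the parts of `ξ`. -/
def IsUncorrelated (d : Fin n → ℕ) (ξ : Finpartition (Finset.univ : Finset (Fin n)))
    (ρ : Matrix (∀ i, Fin (d i)) (∀ i, Fin (d i)) ℂ) : Prop :=
  ∃ σ : (X : Finset (Fin n)) →
      Matrix ((i : X) → Fin (d i)) ((i : X) → Fin (d i)) ℂ,
    (∀ X ∈ ξ.parts, (σ X).PosSemidef ∧ (σ X).trace = 1) ∧
    ∀ a b, ρ a b = ∏ X ∈ ξ.parts, σ X (fun i => a i.1) (fun i => b i.1)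

/-- The set of `ξ`-uncorrelated states. -/
def uncorrelatedStates (d : Fin n → ℕ)
    (ξ : Finpartition (Finset.univ : Finset (Fin n))) :
    Set (Matrix (∀ i, Fin (d i)) (∀ i, Fin (d i)) ℂ) :=
  {ρ | ρ.PosSemidef ∧ ρ.trace = 1 ∧ IsUncorrelated d ξ ρ}

open Finset Matrix

theorem Matrix.PosSemidef.finset_prod_hadamard {m J 𝕜 : Type*} [Fintype m] [RCLike 𝕜]
    (s : Finset J) (A : J → Matrix m m 𝕜) (hA : ∀ j ∈ s, (A j).PosSemidef) :
    (of fun a b => ∏ j ∈ s, A j a b).PosSemidef := by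
  classical
  induction s using Finset.induction with
  | empty =>
    convert posSemidef_vecMulVec_self_star (1 : m → 𝕜) using 1
    ext; simp
  | insert j s hj ih =>
    convert (hA j (mem_insert_self j s)).hadamard (ih fun k hk => hA k (mem_insert_of_mem hk))
      using 1
    ext; simp [prod_insert hj]

namespace Finpartition

theorem prod_prod_filter_subset_of_le {α M : Type*} [DecidableEq α] [CommMonoid M]
    {s : Finset α} {P Q : Finpartition s} (h : P ≤ Q) (f : Finset α → M) :
    ∏ X ∈ Q.parts, ∏ Y ∈ P.parts with Y ⊆ X, f Y = ∏ Y ∈ P.parts, f Y := by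
  rw [← prod_biUnion]
  · congr 1
    ext Y
    simp only [mem_biUnion, mem_filter]
    refine ⟨fun ⟨_, _, hY, _⟩ => hY, fun hY => ?_⟩
    obtain ⟨X, hX, hYX⟩ := h hY
    exact ⟨X, hX, hY, hYX⟩
  · intro X hX X' hX' hne
    refine disjoint_left.2 fun Y hY hY' => ?_
    obtain ⟨i, hi⟩ := P.nonempty_of_mem_parts (mem_filter.1 hY).1
    exact disjoint_left.1 (Q.disjoint hX hX' hne) ((mem_filter.1 hY).2 hi)
      ((mem_filter.1 hY').2 hi)

variable {ι : Type*} [Fintype ι] [DecidableEq ι] {κ : ι → Type*}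

theorem bijective_restrict_parts (P : Finpartition (univ : Finset ι)) :
    Function.Bijective fun (a : ∀ i, κ i) (X : P.parts) => X.1.restrict a := by
  refine ⟨fun a b hab => funext fun i => ?_, fun g => ?_⟩
  · exact congrFun (congrFun hab ⟨P.part i, P.part_mem.2 (mem_univ i)⟩)
      ⟨i, P.mem_part (mem_univ i)⟩
  · refine ⟨fun i => g ⟨P.part i, P.part_mem.2 (mem_univ i)⟩ ⟨i, P.mem_part (mem_univ i)⟩, ?_⟩
    funext ⟨X, hX⟩ ⟨i, hi⟩
    obtain rfl := P.part_eq_of_mem hX hi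
    rfl

theorem sum_prod_restrict [∀ i, Fintype (κ i)] {R : Type*} [CommSemiring R]
    (P : Finpartition (univ : Finset ι)) (f : (X : Finset ι) → ((i : X) → κ i) → R) :
    ∑ a : ∀ i, κ i, ∏ X ∈ P.parts, f X (X.restrict a) = ∏ X ∈ P.parts, ∑ u, f X u := by
  rw [← prod_coe_sort, Fintype.prod_sum]
  exact Fintype.sum_bijective _ P.bijective_restrict_parts _ _ fun a => (prod_coe_sort _ _).symm

/-- The tensor product `⊗_{X ∈ P} σ X` of matrices on the blocks of `P`, in coordinates. -/
def blockTensor {R : Type*} [CommSemiring R] (P : Finpartition (univ : Finset ι))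
    (σ : (X : Finset ι) → Matrix ((i : X) → κ i) ((i : X) → κ i) R) :
    Matrix (∀ i, κ i) (∀ i, κ i) R :=
  of fun a b => ∏ X ∈ P.parts, σ X (X.restrict a) (X.restrict b)

theorem trace_blockTensor [∀ i, Fintype (κ i)] {R : Type*} [CommSemiring R]
    (P : Finpartition (univ : Finset ι))
    (σ : (X : Finset ι) → Matrix ((i : X) → κ i) ((i : X) → κ i) R) :
    (P.blockTensor σ).trace = ∏ X ∈ P.parts, (σ X).trace :=
  P.sum_prod_restrict fun X u => σ X u u

theorem posSemidef_blockTensor [∀ i, Fintype (κ i)] {𝕜 : Type*} [RCLike 𝕜]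
    (P : Finpartition (univ : Finset ι))
    {σ : (X : Finset ι) → Matrix ((i : X) → κ i) ((i : X) → κ i) 𝕜}
    (hσ : ∀ X ∈ P.parts, (σ X).PosSemidef) : (P.blockTensor σ).PosSemidef :=
  PosSemidef.finset_prod_hadamard _ (fun X => (σ X).submatrix X.restrict X.restrict)
    fun X hX => (hσ X hX).submatrix _

def tensorWithin {R : Type*} [CommSemiring R] (P : Finpartition (univ : Finset ι))
    (σ : (X : Finset ι) → Matrix ((i : X) → κ i) ((i : X) → κ i) R) (X : Finset ι) :
    Matrix ((i : X) → κ i) ((i : X) → κ i) R :=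
  of fun u v => ∏ Y ∈ (P.parts.filter (· ⊆ X)).attach,
    σ Y (restrict₂ (mem_filter.1 Y.2).2 u) (restrict₂ (mem_filter.1 Y.2).2 v)

theorem posSemidef_tensorWithin [∀ i, Fintype (κ i)] {𝕜 : Type*} [RCLike 𝕜]
    (P : Finpartition (univ : Finset ι))
    {σ : (X : Finset ι) → Matrix ((i : X) → κ i) ((i : X) → κ i) 𝕜}
    (hσ : ∀ X ∈ P.parts, (σ X).PosSemidef) (X : Finset ι) : (P.tensorWithin σ X).PosSemidef :=
  PosSemidef.finset_prod_hadamard (P.parts.filter (· ⊆ X)).attach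
    (fun Y => (σ Y).submatrix (restrict₂ (mem_filter.1 Y.2).2) (restrict₂ (mem_filter.1 Y.2).2))
    fun Y _ => (hσ Y (mem_filter.1 Y.2).1).submatrix _

theorem blockTensor_eq_of_le {R : Type*} [CommSemiring R] (P : Finpartition (univ : Finset ι))
    {Q : Finpartition (univ : Finset ι)} (h : P ≤ Q)
    (σ : (X : Finset ι) → Matrix ((i : X) → κ i) ((i : X) → κ i) R) :
    P.blockTensor σ = Q.blockTensor (P.tensorWithin σ) := by
  ext a b
  rw [blockTensor, of_apply, ← prod_prod_filter_subset_of_le h]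
  exact prod_congr rfl fun X _ => (prod_attach _ fun Y => σ Y (Y.restrict a) (Y.restrict b)).symm

theorem blockTensor_apply_piecewise_ne_zero {R : Type*} [CommSemiring R] [NoZeroDivisors R]
    [Nontrivial R] (P : Finpartition (univ : Finset ι))
    (σ : (X : Finset ι) → Matrix ((i : X) → κ i) ((i : X) → κ i) R) {X : Finset ι}
    (hX : X ∈ P.parts) {a b : ∀ i, κ i} (ha : P.blockTensor σ a a ≠ 0)
    (hb : P.blockTensor σ b b ≠ 0) :
    P.blockTensor σ (X.piecewise b a) (X.piecewise b a) ≠ 0 := by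
  refine prod_ne_zero_iff.2 fun Y hY => ?_
  by_cases hYX : Y = X
  · subst hYX
    have hrestrict : Y.restrict (Y.piecewise b a) = Y.restrict b :=
      funext fun i => piecewise_eq_of_mem _ _ _ i.2
    rw [hrestrict]
    exact prod_ne_zero_iff.1 hb Y hY
  · have hrestrict : Y.restrict (X.piecewise b a) = Y.restrict a :=
      funext fun i => piecewise_eq_of_notMem _ _ _ (disjoint_left.1 (P.disjoint hY hX hYX) i.2)
    rw [hrestrict]
    exact prod_ne_zero_iff.1 ha Y hY

end Finpartition

section evenMixture

variable {ι : Type*} {κ : ι → Type*} [∀ i, DecidableEq (κ i)]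

noncomputable def evenMixture (x₀ x₁ : ∀ i, κ i) (Y : Finset ι) :
    Matrix ((i : Y) → κ i) ((i : Y) → κ i) ℂ :=
  diagonal (Pi.single (Y.restrict x₀) 2⁻¹ + Pi.single (Y.restrict x₁) 2⁻¹)

variable (x₀ x₁ : ∀ i, κ i) (Y : Finset ι)

theorem posSemidef_evenMixture : (evenMixture x₀ x₁ Y).PosSemidef :=
  PosSemidef.diagonal <| add_nonneg (Pi.single_nonneg.2 (by positivity))
    (Pi.single_nonneg.2 (by positivity))

theorem trace_evenMixture [DecidableEq ι] [∀ i, Fintype (κ i)] :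
    (evenMixture x₀ x₁ Y).trace = 1 := by
  rw [evenMixture, trace_diagonal]
  simp only [Pi.add_apply]
  rw [sum_add_distrib, sum_pi_single', sum_pi_single']
  norm_num

theorem evenMixture_apply_self_ne_zero_iff {u : (i : Y) → κ i} :
    evenMixture x₀ x₁ Y u u ≠ 0 ↔ u = Y.restrict x₀ ∨ u = Y.restrict x₁ := by
  simp only [evenMixture, diagonal_apply_eq, Pi.add_apply, Pi.single_apply]
  split_ifs <;> simp_all

end evenMixture

section

variable {υ ξ : Finpartition (univ : Finset (Fin n))}

theorem isUncorrelated_iff {ρ : Matrix (∀ i, Fin (d i)) (∀ i, Fin (d i)) ℂ} :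
    IsUncorrelated d ξ ρ ↔ ∃ σ, (∀ X ∈ ξ.parts, (σ X).PosSemidef ∧ (σ X).trace = 1) ∧
      ρ = ξ.blockTensor σ :=
  exists_congr fun _ => and_congr_right fun _ => Matrix.ext_iff

theorem blockTensor_mem_uncorrelatedStates
    {σ : (X : Finset (Fin n)) → Matrix ((i : X) → Fin (d i)) ((i : X) → Fin (d i)) ℂ}
    (hσ : ∀ X ∈ ξ.parts, (σ X).PosSemidef ∧ (σ X).trace = 1) :
    ξ.blockTensor σ ∈ uncorrelatedStates d ξ :=
  ⟨ξ.posSemidef_blockTensor fun X hX => (hσ X hX).1,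
    by rw [Finpartition.trace_blockTensor, prod_eq_one fun X hX => (hσ X hX).2],
    isUncorrelated_iff.2 ⟨σ, hσ, rfl⟩⟩

/-- The factors are rescaled by their traces, whose product is `ρ.trace = 1`. -/
theorem isUncorrelated_of_eq_blockTensor {ρ : Matrix (∀ i, Fin (d i)) (∀ i, Fin (d i)) ℂ}
    {M : (X : Finset (Fin n)) → Matrix ((i : X) → Fin (d i)) ((i : X) → Fin (d i)) ℂ}
    (hM : ∀ X ∈ ξ.parts, (M X).PosSemidef) (hρ : ρ = ξ.blockTensor M) (htr : ρ.trace = 1) :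
    IsUncorrelated d ξ ρ := by
  have htrM : ∏ X ∈ ξ.parts, (M X).trace = 1 := by
    rw [← ξ.trace_blockTensor (κ := fun i => Fin (d i)) M, ← hρ, htr]
  have hne : ∀ X ∈ ξ.parts, (M X).trace ≠ 0 :=
    prod_ne_zero_iff.1 (htrM ▸ one_ne_zero)
  refine isUncorrelated_iff.2 ⟨fun X => (M X).trace⁻¹ • M X, fun X hX => ⟨?_, ?_⟩, ?_⟩
  · exact (hM X hX).smul (inv_nonneg.2 (hM X hX).trace_nonneg)
  · rw [trace_smul, smul_eq_mul, inv_mul_cancel₀ (hne X hX)]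
  · ext a b
    simp only [hρ, Finpartition.blockTensor, of_apply, Matrix.smul_apply, smul_eq_mul,
      prod_mul_distrib, prod_inv_distrib, htrM, inv_one, one_mul]

theorem IsUncorrelated.of_le (h : υ ≤ ξ) {ρ : Matrix (∀ i, Fin (d i)) (∀ i, Fin (d i)) ℂ}
    (hρ : IsUncorrelated d υ ρ) (htr : ρ.trace = 1) : IsUncorrelated d ξ ρ := by
  obtain ⟨σ, hσ, rfl⟩ := isUncorrelated_iff.1 hρ
  exact isUncorrelated_of_eq_blockTensor
    (fun X _ => υ.posSemidef_tensorWithin (fun Y hY => (hσ Y hY).1) X)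
    (υ.blockTensor_eq_of_le (κ := fun i => Fin (d i)) h σ) htr

theorem uncorrelatedStates_mono (h : υ ≤ ξ) : uncorrelatedStates d υ ⊆ uncorrelatedStates d ξ :=
  fun _ ⟨hpsd, htr, hρ⟩ => ⟨hpsd, htr, hρ.of_le h htr⟩

theorem le_of_uncorrelatedStates_subset (hd : ∀ i, 1 < d i)
    (hsub : uncorrelatedStates d υ ⊆ uncorrelatedStates d ξ) : υ ≤ ξ := by
  intro Y hY
  by_contra! hYX
  obtain ⟨i, hiY⟩ := υ.nonempty_of_mem_parts hY
  have hX : ξ.part i ∈ ξ.parts := ξ.part_mem.2 (mem_univ i)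
  obtain ⟨j, hjY, hjX⟩ := not_subset.1 (hYX _ hX)
  let x₀ : ∀ k, Fin (d k) := fun k => ⟨0, by linarith [hd k]⟩
  let x₁ : ∀ k, Fin (d k) := fun k => ⟨1, hd k⟩
  have hx : ∀ k, x₀ k ≠ x₁ k := fun k h => by simp [x₀, x₁, Fin.ext_iff] at h
  obtain ⟨-, -, hρ⟩ := hsub <| blockTensor_mem_uncorrelatedStates fun Y _ =>
    ⟨posSemidef_evenMixture x₀ x₁ Y, trace_evenMixture x₀ x₁ Y⟩
  obtain ⟨τ, -, hτ⟩ := isUncorrelated_iff.1 hρ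
  have hdiag : ∀ a, υ.blockTensor (evenMixture x₀ x₁) a a = ξ.blockTensor τ a a := fun a => by
    rw [hτ]
  have h₀ : ξ.blockTensor τ x₀ x₀ ≠ 0 := by
    rw [← hdiag]
    exact prod_ne_zero_iff.2 fun Y _ => (evenMixture_apply_self_ne_zero_iff x₀ x₁ Y).2 (.inl rfl)
  have h₁ : ξ.blockTensor τ x₁ x₁ ≠ 0 := by
    rw [← hdiag]
    exact prod_ne_zero_iff.2 fun Y _ => (evenMixture_apply_self_ne_zero_iff x₀ x₁ Y).2 (.inr rfl)
  have hmix := ξ.blockTensor_apply_piecewise_ne_zero (κ := fun k => Fin (d k)) τ hX h₀ h₁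
  rw [← hdiag] at hmix
  rcases (evenMixture_apply_self_ne_zero_iff x₀ x₁ Y).1 (prod_ne_zero_iff.1 hmix Y hY) with h | h
  · have := congrFun h ⟨i, hiY⟩
    simp only [restrict, piecewise_eq_of_mem _ _ _ (ξ.mem_part (mem_univ i))] at this
    exact hx i this.symm
  · have := congrFun h ⟨j, hjY⟩
    simp only [restrict, piecewise_eq_of_notMem _ _ _ hjX] at this
    exact hx j this

end

theorem refines_iff_uncorrelated_subset_general
    (hd : ∀ i, 1 < d i)
    (υ ξ : Finpartition (Finset.univ : Finset (Fin n))) :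
    υ ≤ ξ ↔ uncorrelatedStates d υ ⊆ uncorrelatedStates d ξ :=
  ⟨uncorrelatedStates_mono, le_of_uncorrelatedStates_subset hd⟩

/-- A partition `υ` refines `ξ` iff every `υ`-uncorrelated state is
`ξ`-uncorrelated: the map `ξ ↦ D(ξ)` is an order embedding from the
refinement lattice of partitions to state sets. -/
theorem refines_iff_uncorrelated_subset
    (hn : 2 ≤ n) (hd : ∀ i, 1 < d i)
    (υ ξ : Finpartition (Finset.univ : Finset (Fin n))) :
    υ ≤ ξ ↔ uncorrelatedStates d υ ⊆ uncorrelatedStates d ξ :=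
  refines_iff_uncorrelated_subset_general hd υ ξ
end

section
/- Let ξ and ξ' be partitions of a finite set L. A state is both ξ-uncorrelated and ξ'-uncorrelated if and only if it is (ξ ∧ ξ')-uncorrelated, where ξ ∧ ξ' is the meet in the refinement lattice, whose blocks are the nonempty intersections X ∩ X' for X ∈ ξ, X' ∈ ξ'. That is, D(ξ) ∩ D(ξ') = D(ξ ∧ ξ'). -/
open scoped BigOperators ComplexOrder

variable {n : ℕ} {d : Fin n → ℕ}

/-- The configuration equal to `a` on `S` and to `c` off `S`. -/
def msk (S : Finset (Fin n)) (a c : ∀ i, Fin (d i)) : ∀ i, Fin (d i) :=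
  fun i => if i ∈ S then a i else c i

@[simp] lemma msk_apply (S : Finset (Fin n)) (a c : ∀ i, Fin (d i)) (i : Fin n) :
    msk S a c i = if i ∈ S then a i else c i := rfl

lemma msk_empty (a c : ∀ i, Fin (d i)) : msk ∅ a c = c := by
  funext i; simp [msk]

lemma msk_univ (a c : ∀ i, Fin (d i)) : msk Finset.univ a c = a := by
  funext i; simp [msk]

lemma msk_same (S : Finset (Fin n)) (a : ∀ i, Fin (d i)) : msk S a a = a := by
  funext i; simp [msk]

/-- `φ` (a normalized state, `φ c c = 1`) splits along the subsystem set `S`. -/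
def Splits (φ : (∀ i, Fin (d i)) → (∀ i, Fin (d i)) → ℂ)
    (c : ∀ i, Fin (d i)) (S : Finset (Fin n)) : Prop :=
  ∀ a b, φ a b = φ (msk S a c) (msk S b c) * φ (msk S c a) (msk S c b)

variable {φ : (∀ i, Fin (d i)) → (∀ i, Fin (d i)) → ℂ} {c : ∀ i, Fin (d i)}

lemma splits_empty (h1 : φ c c = 1) : Splits φ c (∅ : Finset (Fin n)) := by
  intro a b
  rw [msk_empty, msk_empty, msk_empty, msk_empty, h1, one_mul]

lemma splits_union {S T : Finset (Fin n)} (hST : Disjoint S T)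
    (hS : Splits φ c S) (hT : Splits φ c T) : Splits φ c (S ∪ T) := by
  intro a b
  have e1 : msk T (msk S c a) c = msk T a c := by
    funext i
    by_cases h : i ∈ T
    · have : i ∉ S := fun hS' => (Finset.disjoint_left.1 hST) hS' h
      simp [msk, h, this]
    · simp [msk, h]
  have e1b : msk T (msk S c b) c = msk T b c := by
    funext i
    by_cases h : i ∈ T
    · have : i ∉ S := fun hS' => (Finset.disjoint_left.1 hST) hS' h
      simp [msk, h, this]
    · simp [msk, h]
  have e2 : msk T c (msk S c a) = msk (S ∪ T) c a := by
    funext i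
    by_cases h : i ∈ T <;> by_cases h' : i ∈ S <;> simp [msk, h, h']
  have e2b : msk T c (msk S c b) = msk (S ∪ T) c b := by
    funext i
    by_cases h : i ∈ T <;> by_cases h' : i ∈ S <;> simp [msk, h, h']
  have e3 : msk S (msk (S ∪ T) a c) c = msk S a c := by
    funext i
    by_cases h : i ∈ S <;> simp [msk, h]
  have e3b : msk S (msk (S ∪ T) b c) c = msk S b c := by
    funext i
    by_cases h : i ∈ S <;> simp [msk, h]
  have e4 : msk S c (msk (S ∪ T) a c) = msk T a c := by
    funext i
    by_cases h : i ∈ S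
    · have : i ∉ T := fun hT' => (Finset.disjoint_left.1 hST) h hT'
      simp [msk, h, this]
    · by_cases h' : i ∈ T <;> simp [msk, h, h']
  have e4b : msk S c (msk (S ∪ T) b c) = msk T b c := by
    funext i
    by_cases h : i ∈ S
    · have : i ∉ T := fun hT' => (Finset.disjoint_left.1 hST) h hT'
      simp [msk, h, this]
    · by_cases h' : i ∈ T <;> simp [msk, h, h']
  calc φ a b = φ (msk S a c) (msk S b c) * φ (msk S c a) (msk S c b) := hS a b
    _ = φ (msk S a c) (msk S b c) *
        (φ (msk T (msk S c a) c) (msk T (msk S c b) c) *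
          φ (msk T c (msk S c a)) (msk T c (msk S c b))) := by rw [← hT]
    _ = φ (msk S a c) (msk S b c) * φ (msk T a c) (msk T b c) *
          φ (msk (S ∪ T) c a) (msk (S ∪ T) c b) := by rw [e1, e1b, e2, e2b]; ring
    _ = φ (msk (S ∪ T) a c) (msk (S ∪ T) b c) * φ (msk (S ∪ T) c a) (msk (S ∪ T) c b) := by
          rw [hS (msk (S ∪ T) a c) (msk (S ∪ T) b c), e3, e3b, e4, e4b]

lemma splits_sup {ι : Type*} [DecidableEq ι] (h1 : φ c c = 1) (𝒮 : Finset ι)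
    (f : ι → Finset (Fin n)) (hind : 𝒮.SupIndep f)
    (hsp : ∀ S ∈ 𝒮, Splits φ c (f S)) : Splits φ c (𝒮.sup f) := by
  induction 𝒮 using Finset.induction_on with
  | empty => simpa using splits_empty h1
  | @insert S 𝒮 hS ih =>
      rw [Finset.sup_insert]
      have hdisj : Disjoint (f S) (𝒮.sup f) :=
        hind (Finset.subset_insert S 𝒮) (Finset.mem_insert_self S 𝒮) hS
      exact splits_union hdisj (hsp S (Finset.mem_insert_self S 𝒮))
        (ih (hind.subset (Finset.subset_insert S 𝒮))
          (fun T hT => hsp T (Finset.mem_insert_of_mem hT)))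

lemma splits_inter {X Y : Finset (Fin n)} (hX : Splits φ c X) (hY : Splits φ c Y) :
    Splits φ c (X ∩ Y) := by
  intro a b
  set Z := X ∩ Y with hZ
  have e1 : msk Y (msk X a c) c = msk Z a c := by
    funext i; by_cases h : i ∈ Y <;> by_cases h' : i ∈ X <;> simp [msk, h, h', hZ]
  have e1b : msk Y (msk X b c) c = msk Z b c := by
    funext i; by_cases h : i ∈ Y <;> by_cases h' : i ∈ X <;> simp [msk, h, h', hZ]
  have e2 : msk Y c (msk X a c) = msk (X \ Y) a c := by
    funext i; by_cases h : i ∈ Y <;> by_cases h' : i ∈ X <;> simp [msk, h, h']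
  have e2b : msk Y c (msk X b c) = msk (X \ Y) b c := by
    funext i; by_cases h : i ∈ Y <;> by_cases h' : i ∈ X <;> simp [msk, h, h']
  have e3 : msk X (msk Z c a) c = msk (X \ Y) a c := by
    funext i; by_cases h : i ∈ X <;> by_cases h' : i ∈ Y <;> simp [msk, h, h', hZ]
  have e3b : msk X (msk Z c b) c = msk (X \ Y) b c := by
    funext i; by_cases h : i ∈ X <;> by_cases h' : i ∈ Y <;> simp [msk, h, h', hZ]
  have e4 : msk X c (msk Z c a) = msk X c a := by
    funext i; by_cases h : i ∈ X <;> by_cases h' : i ∈ Y <;> simp [msk, h, h', hZ]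
  have e4b : msk X c (msk Z c b) = msk X c b := by
    funext i; by_cases h : i ∈ X <;> by_cases h' : i ∈ Y <;> simp [msk, h, h', hZ]
  have key : φ (msk Z c a) (msk Z c b) =
      φ (msk (X \ Y) a c) (msk (X \ Y) b c) * φ (msk X c a) (msk X c b) := by
    rw [hX (msk Z c a) (msk Z c b), e3, e3b, e4, e4b]
  calc φ a b = φ (msk X a c) (msk X b c) * φ (msk X c a) (msk X c b) := hX a b
    _ = (φ (msk Z a c) (msk Z b c) * φ (msk (X \ Y) a c) (msk (X \ Y) b c)) *
          φ (msk X c a) (msk X c b) := by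
            rw [hY (msk X a c) (msk X b c), e1, e1b, e2, e2b]
    _ = φ (msk Z a c) (msk Z b c) * φ (msk Z c a) (msk Z c b) := by rw [key]; ring

lemma prod_of_splits (𝒮 : Finset (Finset (Fin n))) :
    𝒮.SupIndep id → (∀ S ∈ 𝒮, Splits φ c S) → ∀ a b : ∀ i, Fin (d i),
    φ a b = φ (msk (𝒮.sup id) c a) (msk (𝒮.sup id) c b) *
      ∏ S ∈ 𝒮, φ (msk S a c) (msk S b c) := by
  induction 𝒮 using Finset.induction_on with
  | empty => intro _ _ a b; simp [msk_empty]
  | @insert S 𝒮 hS ih =>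
      intro hind hsp a b
      have hpd : ∀ T ∈ 𝒮, Disjoint S T := by
        intro T hT
        exact hind.pairwiseDisjoint (Finset.mem_insert_self S 𝒮)
          (Finset.mem_insert_of_mem hT) (fun h => hS (h ▸ hT))
      set a' := msk S c a with ha'
      set b' := msk S c b with hb'
      have ih' := ih (hind.subset (Finset.subset_insert S 𝒮))
        (fun T hT => hsp T (Finset.mem_insert_of_mem hT)) a' b'
      have e1 : ∀ T ∈ 𝒮, msk T a' c = msk T a c := by
        intro T hT
        funext i
        by_cases h : i ∈ T
        · have : i ∉ S := fun hS' => (Finset.disjoint_left.1 (hpd T hT)) hS' h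
          simp [msk, ha', h, this]
        · simp [msk, h]
      have e1b : ∀ T ∈ 𝒮, msk T b' c = msk T b c := by
        intro T hT
        funext i
        by_cases h : i ∈ T
        · have : i ∉ S := fun hS' => (Finset.disjoint_left.1 (hpd T hT)) hS' h
          simp [msk, hb', h, this]
        · simp [msk, h]
      have e2 : msk (𝒮.sup id) c a' = msk ((insert S 𝒮).sup id) c a := by
        funext i
        by_cases h : i ∈ 𝒮.sup id <;> by_cases h' : i ∈ S <;>
          simp [msk, ha', h, h', Finset.sup_insert]
      have e2b : msk (𝒮.sup id) c b' = msk ((insert S 𝒮).sup id) c b := by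
        funext i
        by_cases h : i ∈ 𝒮.sup id <;> by_cases h' : i ∈ S <;>
          simp [msk, hb', h, h', Finset.sup_insert]
      have ih'' : φ a' b' =
          φ (msk ((insert S 𝒮).sup id) c a) (msk ((insert S 𝒮).sup id) c b) *
            ∏ T ∈ 𝒮, φ (msk T a c) (msk T b c) := by
        rw [ih', e2, e2b]
        exact congrArg _ (Finset.prod_congr rfl fun T hT => by rw [e1 T hT, e1b T hT])
      rw [hsp S (Finset.mem_insert_self S 𝒮) a b, Finset.prod_insert hS, ih'']
      ring

lemma prodForm_of_splits (h1 : φ c c = 1)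
    (π : Finpartition (Finset.univ : Finset (Fin n)))
    (hsp : ∀ X ∈ π.parts, Splits φ c X) :
    ∀ a b, φ a b = ∏ X ∈ π.parts, φ (msk X a c) (msk X b c) := by
  intro a b
  have h := prod_of_splits π.parts π.supIndep hsp a b
  rw [π.sup_parts, msk_univ, msk_univ, h1, one_mul] at h
  exact h

lemma splits_of_prodForm (h1 : φ c c = 1)
    (π : Finpartition (Finset.univ : Finset (Fin n)))
    (hPF : ∀ a b, φ a b = ∏ X ∈ π.parts, φ (msk X a c) (msk X b c)) :
    ∀ X ∈ π.parts, Splits φ c X := by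
  intro X hX a b
  have key : φ (msk X c a) (msk X c b) =
      ∏ X' ∈ π.parts.erase X, φ (msk X' a c) (msk X' b c) := by
    rw [hPF (msk X c a) (msk X c b), ← Finset.mul_prod_erase _ _ hX]
    have h0 : msk X (msk X c a) c = c := by
      funext i; by_cases h : i ∈ X <;> simp [msk, h]
    have h0b : msk X (msk X c b) c = c := by
      funext i; by_cases h : i ∈ X <;> simp [msk, h]
    rw [h0, h0b, h1, one_mul]
    refine Finset.prod_congr rfl fun X' hX' => ?_
    have hne : X' ≠ X := (Finset.mem_erase.1 hX').1
    have hd : Disjoint X X' := π.disjoint (Finset.mem_coe.2 hX)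
      (Finset.mem_coe.2 (Finset.mem_of_mem_erase hX')) (fun h => hne h.symm)
    have e : msk X' (msk X c a) c = msk X' a c := by
      funext i
      by_cases h : i ∈ X'
      · have : i ∉ X := fun hX'' => (Finset.disjoint_left.1 hd) hX'' h
        simp [msk, h, this]
      · simp [msk, h]
    have eb : msk X' (msk X c b) c = msk X' b c := by
      funext i
      by_cases h : i ∈ X'
      · have : i ∉ X := fun hX'' => (Finset.disjoint_left.1 hd) hX'' h
        simp [msk, h, this]
      · simp [msk, h]
    rw [e, eb]
  rw [hPF a b, key]
  exact (Finset.mul_prod_erase _ _ hX).symm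

def extd (c : ∀ i, Fin (d i)) (X : Finset (Fin n)) (u : (i : X) → Fin (d i)) :
    ∀ i, Fin (d i) := fun i => if h : i ∈ X then u ⟨i, h⟩ else c i

lemma extd_restrict (c a : ∀ i, Fin (d i)) (X : Finset (Fin n)) :
    extd c X (fun i => a i.1) = msk X a c := by
  funext i; by_cases h : i ∈ X <;> simp [extd, msk, h]

lemma extd_self (c : ∀ i, Fin (d i)) (X : Finset (Fin n)) :
    extd c X (fun i => c i.1) = c := by
  funext i; by_cases h : i ∈ X <;> simp [extd, h]

lemma psd_diag_nonneg {m : Type*} [Fintype m] [DecidableEq m] {M : Matrix m m ℂ}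
    (hM : M.PosSemidef) (i : m) : 0 ≤ M i i := by
  exact hM.diag_nonneg

lemma trace_eq_sum {m : Type*} [Fintype m] (M : Matrix m m ℂ) :
    M.trace = ∑ i, M i i := rfl

/-- The workhorse: for a PSD state with `ρ c c ≠ 0`, being `π`-uncorrelated is
equivalent to the canonical product form anchored at `c`. Forward direction here. -/
lemma prodForm_of_isUncorrelated (ρ : Matrix (∀ i, Fin (d i)) (∀ i, Fin (d i)) ℂ)
    (c : ∀ i, Fin (d i)) (hc : ρ c c ≠ 0)
    (π : Finpartition (Finset.univ : Finset (Fin n)))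
    (hU : IsUncorrelated d π ρ) :
    ∀ a b, ρ a b / ρ c c = ∏ X ∈ π.parts, (ρ (msk X a c) (msk X b c) / ρ c c) := by
  obtain ⟨σ, hσ, hprod⟩ := hU
  intro a b
  set g : Finset (Fin n) → ℂ := fun X => σ X (fun i => c i.1) (fun i => c i.1) with hg
  have hgp : ∏ X ∈ π.parts, g X = ρ c c := (hprod c c).symm
  have hg0 : ∀ X ∈ π.parts, g X ≠ 0 := by
    intro X hX h0
    exact hc (hgp ▸ Finset.prod_eq_zero hX h0)
  have hmsk : ∀ X ∈ π.parts, ρ (msk X a c) (msk X b c)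
      = σ X (fun i => a i.1) (fun i => b i.1) * ∏ X' ∈ π.parts.erase X, g X' := by
    intro X hX
    have ra : (fun (i : {x // x ∈ X}) => msk X a c i.1)
        = fun (i : {x // x ∈ X}) => a i.1 := by
      funext i; simp [msk, i.2]
    have rb : (fun (i : {x // x ∈ X}) => msk X b c i.1)
        = fun (i : {x // x ∈ X}) => b i.1 := by
      funext i; simp [msk, i.2]
    rw [hprod, ← Finset.mul_prod_erase _ _ hX, ra, rb]
    congr 1
    refine Finset.prod_congr rfl fun X' hX' => ?_
    have hd : Disjoint X X' := π.disjoint (Finset.mem_coe.2 hX)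
      (Finset.mem_coe.2 (Finset.mem_of_mem_erase hX'))
      (fun h => (Finset.mem_erase.1 hX').1 h.symm)
    have h1 : (fun (i : {x // x ∈ X'}) => msk X a c i.1)
        = fun (i : {x // x ∈ X'}) => c i.1 := by
      funext i
      have : i.1 ∉ X := fun hm => (Finset.disjoint_left.1 hd) hm i.2
      simp [msk, this]
    have h2 : (fun (i : {x // x ∈ X'}) => msk X b c i.1)
        = fun (i : {x // x ∈ X'}) => c i.1 := by
      funext i
      have : i.1 ∉ X := fun hm => (Finset.disjoint_left.1 hd) hm i.2
      simp [msk, this]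
    rw [h1, h2]
  have herase : ∀ X ∈ π.parts, ∏ X' ∈ π.parts.erase X, g X' = ρ c c / g X := by
    intro X hX
    rw [eq_div_iff (hg0 X hX), mul_comm, Finset.mul_prod_erase _ _ hX, hgp]
  symm
  calc ∏ X ∈ π.parts, (ρ (msk X a c) (msk X b c) / ρ c c)
      = ∏ X ∈ π.parts, (σ X (fun i => a i.1) (fun i => b i.1) / g X) := by
        refine Finset.prod_congr rfl fun X hX => ?_
        rw [hmsk X hX, herase X hX]
        field_simp
    _ = (∏ X ∈ π.parts, σ X (fun i => a i.1) (fun i => b i.1)) / ∏ X ∈ π.parts, g X := by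
        rw [Finset.prod_div_distrib]
    _ = ρ a b / ρ c c := by rw [hgp, ← hprod]

lemma psd_smul {m : Type*} [Fintype m] {M : Matrix m m ℂ}
    (hM : M.PosSemidef) {t : ℂ} (ht : 0 ≤ t) : (t • M).PosSemidef := by
  constructor
  · have hst : star t = t := (IsSelfAdjoint.of_nonneg ht)
    unfold Matrix.IsHermitian
    rw [Matrix.conjTranspose_smul, hM.1, hst]
  · intro x
    exact (hM.smul ht).2 x

lemma complex_inv_nonneg {t : ℂ} (ht : 0 ≤ t) : 0 ≤ t⁻¹ := by
  rw [Complex.le_def] at ht ⊢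
  simp only [Complex.zero_re, Complex.zero_im, Complex.inv_re, Complex.inv_im] at *
  refine ⟨div_nonneg ht.1 (Complex.normSq_nonneg t), ?_⟩
  rw [← ht.2]; simp

noncomputable def partsEquiv (π : Finpartition (Finset.univ : Finset (Fin n))) :
    (∀ X : {X // X ∈ π.parts}, (i : (X : Finset (Fin n))) → Fin (d i)) ≃ (∀ i, Fin (d i)) where
  toFun g i := g ⟨π.part i, π.part_mem.2 (Finset.mem_univ i)⟩ ⟨i, π.mem_part (Finset.mem_univ i)⟩
  invFun a X i := a i.1
  left_inv g := by
    funext X i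
    obtain ⟨X, hX⟩ := X
    obtain ⟨i, hi⟩ := i
    have h : π.part i = X := π.part_eq_of_mem hX hi
    subst h
    rfl
  right_inv a := rfl

lemma sum_prod_parts (π : Finpartition (Finset.univ : Finset (Fin n)))
    (f : (X : Finset (Fin n)) → ((i : X) → Fin (d i)) → ℂ) :
    ∑ a : ∀ i, Fin (d i), ∏ X ∈ π.parts, f X (fun i => a i.1)
      = ∏ X ∈ π.parts, ∑ u : (i : X) → Fin (d i), f X u := by
  rw [← Finset.prod_coe_sort π.parts (fun X => ∑ u : (i : X) → Fin (d i), f X u)]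
  rw [Fintype.prod_sum]
  rw [← Equiv.sum_comp (partsEquiv π)
    (fun a => ∏ X ∈ π.parts, f X (fun i => a i.1))]
  refine Finset.sum_congr rfl fun g _ => ?_
  rw [← Finset.prod_coe_sort π.parts (fun X => f X (fun i => (partsEquiv π g) i.1))]
  refine Finset.prod_congr rfl fun X _ => ?_
  calc f X.1 (fun i => partsEquiv π g i.1)
      = f X.1 ((partsEquiv π).symm (partsEquiv π g) X) := rfl
    _ = f X.1 (g X) := by rw [(partsEquiv π).symm_apply_apply g]

lemma isUncorrelated_of_prodForm (ρ : Matrix (∀ i, Fin (d i)) (∀ i, Fin (d i)) ℂ)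
    (hρ : ρ.PosSemidef) (htr : ρ.trace = 1)
    (c : ∀ i, Fin (d i)) (hc : ρ c c ≠ 0)
    (π : Finpartition (Finset.univ : Finset (Fin n)))
    (hPF : ∀ a b, ρ a b / ρ c c = ∏ X ∈ π.parts, (ρ (msk X a c) (msk X b c) / ρ c c)) :
    IsUncorrelated d π ρ := by
  classical
  set M : (X : Finset (Fin n)) → Matrix ((i : X) → Fin (d i)) ((i : X) → Fin (d i)) ℂ :=
    fun X => ρ.submatrix (extd c X) (extd c X) with hM
  set t : Finset (Fin n) → ℂ := fun X => (M X).trace with ht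
  have hMpsd : ∀ X, (M X).PosSemidef := fun X => hρ.submatrix _
  have hdiag : ∀ (X : Finset (Fin n)) (u : (i : X) → Fin (d i)),
      0 ≤ ρ (extd c X u) (extd c X u) := fun X u => psd_diag_nonneg hρ _
  have htsum : ∀ X : Finset (Fin n),
      t X = ∑ u : (i : X) → Fin (d i), ρ (extd c X u) (extd c X u) := by
    intro X
    simp [ht, hM, Matrix.trace, Matrix.diag, Matrix.submatrix_apply]
  have htnn : ∀ X, 0 ≤ t X := by
    intro X; rw [htsum]; exact Finset.sum_nonneg fun u _ => hdiag X u
  have ht0 : ∀ X, t X ≠ 0 := by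
    intro X h0
    rw [htsum] at h0
    have h := (Finset.sum_eq_zero_iff_of_nonneg (fun u _ => hdiag X u)).1 h0
      (fun i => c i.1) (Finset.mem_univ _)
    rw [extd_self] at h
    exact hc h
  refine ⟨fun X => (t X)⁻¹ • M X, fun X hX =>
    ⟨psd_smul (hMpsd X) (complex_inv_nonneg (htnn X)), by
      rw [Matrix.trace_smul, smul_eq_mul, inv_mul_cancel₀ (ht0 X)]⟩, ?_⟩
  intro a b
  have happ : ∀ X : Finset (Fin n), ((t X)⁻¹ • M X) (fun i => a i.1) (fun i => b i.1)
      = (t X)⁻¹ * ρ (msk X a c) (msk X b c) := by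
    intro X
    simp [hM, Matrix.smul_apply, Matrix.submatrix_apply, extd_restrict, smul_eq_mul]
  set k := π.parts.card with hk
  have hA : ∀ a b : (∀ i, Fin (d i)),
      ρ a b * ρ c c ^ k = (∏ X ∈ π.parts, ρ (msk X a c) (msk X b c)) * ρ c c := by
    intro a b
    have h := hPF a b
    rw [Finset.prod_div_distrib, Finset.prod_const, ← hk] at h
    exact (div_eq_div_iff hc (pow_ne_zero k hc)).1 h
  have hBsum : ∏ X ∈ π.parts, t X
      = ∑ a : ∀ i, Fin (d i), ∏ X ∈ π.parts, ρ (msk X a c) (msk X a c) := by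
    calc ∏ X ∈ π.parts, t X
        = ∏ X ∈ π.parts, ∑ u : (i : X) → Fin (d i), ρ (extd c X u) (extd c X u) :=
          Finset.prod_congr rfl fun X _ => htsum X
      _ = ∑ a : ∀ i, Fin (d i), ∏ X ∈ π.parts,
            ρ (extd c X (fun i => a i.1)) (extd c X (fun i => a i.1)) :=
          (sum_prod_parts π (fun X u => ρ (extd c X u) (extd c X u))).symm
      _ = ∑ a : ∀ i, Fin (d i), ∏ X ∈ π.parts, ρ (msk X a c) (msk X a c) := by
          refine Finset.sum_congr rfl fun a _ => Finset.prod_congr rfl fun X _ => ?_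
          rw [extd_restrict]
  have hB : (∏ X ∈ π.parts, t X) * ρ c c = ρ c c ^ k := by
    rw [hBsum, Finset.sum_mul]
    calc ∑ a : ∀ i, Fin (d i), (∏ X ∈ π.parts, ρ (msk X a c) (msk X a c)) * ρ c c
        = ∑ a : ∀ i, Fin (d i), ρ a a * ρ c c ^ k :=
          Finset.sum_congr rfl fun a _ => (hA a a).symm
      _ = (∑ a : ∀ i, Fin (d i), ρ a a) * ρ c c ^ k := by rw [Finset.sum_mul]
      _ = ρ c c ^ k := by rw [← trace_eq_sum, htr, one_mul]
  have hPt0 : (∏ X ∈ π.parts, t X) ≠ 0 := Finset.prod_ne_zero_iff.2 fun X _ => ht0 X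
  have hP : ∏ X ∈ π.parts, ρ (msk X a c) (msk X b c) = ρ a b * ∏ X ∈ π.parts, t X := by
    apply mul_right_cancel₀ hc
    calc (∏ X ∈ π.parts, ρ (msk X a c) (msk X b c)) * ρ c c
        = ρ a b * ρ c c ^ k := (hA a b).symm
      _ = ρ a b * ((∏ X ∈ π.parts, t X) * ρ c c) := by rw [hB]
      _ = (ρ a b * ∏ X ∈ π.parts, t X) * ρ c c := by ring
  symm
  calc ∏ X ∈ π.parts, ((t X)⁻¹ • M X) (fun i => a i.1) (fun i => b i.1)
      = ∏ X ∈ π.parts, ((t X)⁻¹ * ρ (msk X a c) (msk X b c)) :=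
        Finset.prod_congr rfl fun X _ => happ X
    _ = (∏ X ∈ π.parts, t X)⁻¹ * ∏ X ∈ π.parts, ρ (msk X a c) (msk X b c) := by
        rw [Finset.prod_mul_distrib, ← Finset.prod_inv_distrib]
    _ = (∏ X ∈ π.parts, t X)⁻¹ * (ρ a b * ∏ X ∈ π.parts, t X) := by rw [hP]
    _ = ρ a b := by field_simp

/-- A state is both `ξ`-uncorrelated and `ξ'`-uncorrelated iff it is
`(ξ ⊓ ξ')`-uncorrelated, where the meet in the refinement order has as parts
the nonempty intersections `X ∩ X'`, `X ∈ ξ`, `X' ∈ ξ'`: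
`D(ξ) ∩ D(ξ') = D(ξ ⊓ ξ')`. -/
theorem uncorrelated_inter_eq_meet
    (hd : ∀ i, 1 < d i)
    (ξ ξ' : Finpartition (Finset.univ : Finset (Fin n))) :
    uncorrelatedStates d ξ ∩ uncorrelatedStates d ξ' =
      uncorrelatedStates d (ξ ⊓ ξ') := by
  classical
  ext ρ
  simp only [Set.mem_inter_iff, uncorrelatedStates, Set.mem_setOf_eq]
  have hex : ρ.PosSemidef → ρ.trace = 1 → ∃ c, ρ c c ≠ 0 := by
    intro _ htr
    by_contra h
    push_neg at h
    have h0 : ρ.trace = 0 := by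
      rw [trace_eq_sum]
      exact Finset.sum_eq_zero fun a _ => h a
    rw [htr] at h0
    exact one_ne_zero h0
  constructor
  · rintro ⟨⟨hP, htr, hU⟩, ⟨-, -, hU'⟩⟩
    refine ⟨hP, htr, ?_⟩
    obtain ⟨c, hc⟩ := hex hP htr
    have h1 : (fun a b => ρ a b / ρ c c) c c = 1 := div_self hc
    have hsp : ∀ X ∈ ξ.parts, Splits (fun a b => ρ a b / ρ c c) c X :=
      splits_of_prodForm h1 ξ (prodForm_of_isUncorrelated ρ c hc ξ hU)
    have hsp' : ∀ Y ∈ ξ'.parts, Splits (fun a b => ρ a b / ρ c c) c Y :=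
      splits_of_prodForm h1 ξ' (prodForm_of_isUncorrelated ρ c hc ξ' hU')
    have hspm : ∀ Z ∈ (ξ ⊓ ξ').parts, Splits (fun a b => ρ a b / ρ c c) c Z := by
      intro Z hZ
      rw [Finpartition.parts_inf] at hZ
      obtain ⟨hne, hmem⟩ := Finset.mem_erase.1 hZ
      obtain ⟨⟨X, Y⟩, hXY, rfl⟩ := Finset.mem_image.1 hmem
      rw [Finset.mem_product] at hXY
      have h := splits_inter (hsp X hXY.1) (hsp' Y hXY.2)
      simpa [Finset.inf_eq_inter] using h
    exact isUncorrelated_of_prodForm ρ hP htr c hc (ξ ⊓ ξ')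
      (prodForm_of_splits h1 (ξ ⊓ ξ') hspm)
  · rintro ⟨hP, htr, hU⟩
    obtain ⟨c, hc⟩ := hex hP htr
    have h1 : (fun a b => ρ a b / ρ c c) c c = 1 := div_self hc
    have hspm : ∀ Z ∈ (ξ ⊓ ξ').parts, Splits (fun a b => ρ a b / ρ c c) c Z :=
      splits_of_prodForm h1 (ξ ⊓ ξ')
        (prodForm_of_isUncorrelated ρ c hc (ξ ⊓ ξ') hU)
    have hmem : ∀ {X Y : Finset (Fin n)}, X ∈ ξ.parts → Y ∈ ξ'.parts →
        Splits (fun a b => ρ a b / ρ c c) c (X ∩ Y) := by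
      intro X Y hX hY
      by_cases hZe : X ∩ Y = ∅
      · rw [hZe]; exact splits_empty h1
      · apply hspm
        rw [Finpartition.parts_inf]
        refine Finset.mem_erase.2 ⟨?_,
          Finset.mem_image.2 ⟨(X, Y), Finset.mem_product.2 ⟨hX, hY⟩, ?_⟩⟩
        · simpa [Finset.bot_eq_empty] using hZe
        · simp [Finset.inf_eq_inter]
    have hsplit : ∀ (π π' : Finpartition (Finset.univ : Finset (Fin n))),
        (∀ {X Y : Finset (Fin n)}, X ∈ π.parts → Y ∈ π'.parts →
          Splits (fun a b => ρ a b / ρ c c) c (X ∩ Y)) →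
        ∀ X ∈ π.parts, Splits (fun a b => ρ a b / ρ c c) c X := by
      intro π π' hm X hX
      have hXeq : X = π'.parts.sup (fun Y => X ∩ Y) := by
        have h := Finset.sup_inf_distrib_left π'.parts id X
        rw [π'.sup_parts] at h
        simpa [Finset.inf_eq_inter] using h
      rw [hXeq]
      refine splits_sup h1 π'.parts (fun Y => X ∩ Y) ?_ ?_
      · intro T hT Y hY hYT
        refine Disjoint.mono ?_ ?_ (π'.supIndep hT hY hYT)
        · exact Finset.inter_subset_right
        · exact Finset.sup_mono_fun fun Z _ => Finset.inter_subset_right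
      · intro Y hY
        exact hm hX hY
    have hsplitX := hsplit ξ ξ' (fun hX hY => hmem hX hY)
    have hsplitY := hsplit ξ' ξ (fun hY hX => by
      rw [Finset.inter_comm]; exact hmem hX hY)
    exact ⟨⟨hP, htr, isUncorrelated_of_prodForm ρ hP htr c hc ξ
        (prodForm_of_splits h1 ξ hsplitX)⟩,
      hP, htr, isUncorrelated_of_prodForm ρ hP htr c hc ξ'
        (prodForm_of_splits h1 ξ' hsplitY)⟩
end

section
/- Let P₁ be a finite lattice, P₂ the lattice of nonempty down-sets of P₁ ordered by inclusion, and D : P₂ → Set S a map satisfying D(ā ∪ b̄) = D(ā) ∪ D(b̄), D(ā ∩ b̄) = D(ā) ∩ D(b̄), and ā ⊆ b̄ ⇔ D(ā) ⊆ D(b̄). For a nonempty up-set F of P₂ with complement F' = P₂ \ F, define the class C(F) = (⋂_{b̄∈F'} D(b̄)ᶜ) ∩ (⋂_{ā∈F} D(ā)). Then C(F) ≠ ∅ if and only if ⋂F ⊄ (not a subset of) ⋃F', i.e. inf F ≰ sup F' in P₂ (when F' is empty interpret sup F' so that the condition holds automatically given D reflects order and classes use full space conventions). -/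
/-!
Since every nonempty down-set contains `⊥` and `P₂` is finite, `inf F` and `sup F'` are again
elements of `P₂`, and `D` carries them to `⋂ a ∈ F, D a` and `⋃ b ∈ F', D b`. Hence
`C(F) = D (inf F) \ D (sup F')`, which is nonempty iff `D (inf F) ⊄ D (sup F')`, i.e. iff
`inf F ⊄ sup F'` because `D` preserves and reflects inclusion. If `F'` is empty, `C(F) = D (inf F)`
is nonempty and `sup F' = ∅`.
-/

/-- The nonempty down-sets of a lattice `P`, i.e. the Level-II labels `P₂`. -/
def NeDownSet (P : Type*) [Preorder P] : Type _ :=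
  {s : Set P // IsLowerSet s ∧ s.Nonempty}

instance (P : Type*) [Preorder P] : PartialOrder (NeDownSet P) :=
  Subtype.partialOrder _

theorem Finset.apply_inf'_eq_biInter {α β : Type*} [SemilatticeInf α] {f : α → Set β}
    (hf : ∀ x y, f (x ⊓ y) = f x ∩ f y) {s : Finset α} (hs : s.Nonempty) :
    f (s.inf' hs id) = ⋂ x ∈ s, f x := by
  rw [Finset.apply_inf'_eq_inf'_comp hs f hf, Finset.inf'_eq_inf, Finset.inf_set_eq_iInter]
  rfl

theorem Finset.apply_sup'_eq_biUnion {α β : Type*} [SemilatticeSup α] {f : α → Set β}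
    (hf : ∀ x y, f (x ⊔ y) = f x ∪ f y) {s : Finset α} (hs : s.Nonempty) :
    f (s.sup' hs id) = ⋃ x ∈ s, f x := by
  rw [Finset.apply_sup'_eq_sup'_comp hs f hf, Finset.sup'_eq_sup, Finset.sup_set_eq_biUnion]
  rfl

namespace NeDownSet

variable {P S : Type*} [Preorder P]

instance [Finite P] : Finite (NeDownSet P) :=
  inferInstanceAs (Finite {s : Set P // IsLowerSet s ∧ s.Nonempty})

theorem bot_mem [OrderBot P] (a : NeDownSet P) : ⊥ ∈ a.1 :=
  a.2.2.elim fun _ hx ↦ a.2.1 bot_le hx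

instance [OrderBot P] : Lattice (NeDownSet P) :=
  Subtype.lattice
    (fun _ _ hs ht ↦ ⟨hs.1.union ht.1, hs.2.mono Set.subset_union_left⟩)
    (fun s t hs ht ↦ ⟨hs.1.inter ht.1, ⊥, bot_mem ⟨s, hs⟩, bot_mem ⟨t, ht⟩⟩)

theorem coe_inf [OrderBot P] (a b : NeDownSet P) : (a ⊓ b).1 = a.1 ∩ b.1 := rfl

theorem coe_sup [OrderBot P] (a b : NeDownSet P) : (a ⊔ b).1 = a.1 ∪ b.1 := rfl

theorem exists_eq_biInter [OrderBot P] [Finite P] {F : Set (NeDownSet P)} (hF : F.Nonempty)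
    {D : NeDownSet P → Set S} (hD : ∀ a b, D (a ⊓ b) = D a ∩ D b) :
    ∃ m : NeDownSet P, m.1 = ⋂ a ∈ F, a.1 ∧ D m = ⋂ a ∈ F, D a := by
  have hne : F.toFinite.toFinset.Nonempty := F.toFinite.toFinset_nonempty.2 hF
  refine ⟨F.toFinite.toFinset.inf' hne id, ?_, ?_⟩
  · simpa using Finset.apply_inf'_eq_biInter (f := fun a : NeDownSet P ↦ a.1) coe_inf hne
  · simpa using Finset.apply_inf'_eq_biInter hD hne

theorem exists_eq_biUnion [OrderBot P] [Finite P] {F : Set (NeDownSet P)} (hF : F.Nonempty)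
    {D : NeDownSet P → Set S} (hD : ∀ a b, D (a ⊔ b) = D a ∪ D b) :
    ∃ m : NeDownSet P, m.1 = ⋃ a ∈ F, a.1 ∧ D m = ⋃ a ∈ F, D a := by
  have hne : F.toFinite.toFinset.Nonempty := F.toFinite.toFinset_nonempty.2 hF
  refine ⟨F.toFinite.toFinset.sup' hne id, ?_, ?_⟩
  · simpa using Finset.apply_sup'_eq_biUnion (f := fun a : NeDownSet P ↦ a.1) coe_sup hne
  · simpa using Finset.apply_sup'_eq_biUnion hD hne

end NeDownSet

theorem class_nonempty_iff_inf_not_le_sup_general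
    {P₁ S : Type*} [Lattice P₁] [OrderBot P₁] [Fintype P₁]
    (D : NeDownSet P₁ → Set S)
    (hord : ∀ a b : NeDownSet P₁, a.1 ⊆ b.1 ↔ D a ⊆ D b)
    (hun : ∀ a b c : NeDownSet P₁, c.1 = a.1 ∪ b.1 → D c = D a ∪ D b)
    (hint : ∀ a b c : NeDownSet P₁, c.1 = a.1 ∩ b.1 → D c = D a ∩ D b)
    (hDne : ∀ a : NeDownSet P₁, (D a).Nonempty)
    (F : Set (NeDownSet P₁)) (hFne : F.Nonempty) :
    ((⋂ b ∈ Fᶜ, (D b)ᶜ) ∩ ⋂ a ∈ F, D a).Nonempty ↔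
      ¬ (⋂ a ∈ F, a.1) ⊆ ⋃ b ∈ Fᶜ, b.1 := by
  obtain ⟨m, hm, hDm⟩ := NeDownSet.exists_eq_biInter hFne fun a b ↦ hint a b _ rfl
  rw [← hm, ← hDm]
  rcases Fᶜ.eq_empty_or_nonempty with hc | hc
  · simp [hc, hDne m, m.2.2.ne_empty]
  · obtain ⟨u, hu, hDu⟩ := NeDownSet.exists_eq_biUnion hc fun a b ↦ hun a b _ rfl
    rw [← Set.compl_iUnion₂, ← hu, ← hDu, hord, Set.inter_comm, ← Set.sdiff_eq,
      Set.sdiff_nonempty]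

/-- Existence criterion (Proposition 1): for a nonempty up-set `F` of the
lattice `P₂` of nonempty down-sets of a finite lattice `P₁`, and
`D : P₂ → Set S` order-reflecting, commuting with binary unions/intersections,
with nonempty values, the class
`C(F) = (⋂ b ∈ Fᶜ, (D b)ᶜ) ∩ (⋂ a ∈ F, D a)` is nonempty iff
`inf F ≰ sup Fᶜ`, i.e. `¬ (⋂ a ∈ F, a) ⊆ (⋃ b ∈ Fᶜ, b)`. -/
theorem class_nonempty_iff_inf_not_le_sup
    {P₁ S : Type*} [Lattice P₁] [OrderBot P₁] [Fintype P₁]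
    (D : NeDownSet P₁ → Set S)
    (hord : ∀ a b : NeDownSet P₁, a.1 ⊆ b.1 ↔ D a ⊆ D b)
    (hun : ∀ a b c : NeDownSet P₁, c.1 = a.1 ∪ b.1 → D c = D a ∪ D b)
    (hint : ∀ a b c : NeDownSet P₁, c.1 = a.1 ∩ b.1 → D c = D a ∩ D b)
    (hDne : ∀ a : NeDownSet P₁, (D a).Nonempty)
    (F : Set (NeDownSet P₁)) (hF : IsUpperSet F) (hFne : F.Nonempty) :
    ((⋂ b ∈ Fᶜ, (D b)ᶜ) ∩ ⋂ a ∈ F, D a).Nonempty ↔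
      ¬ (⋂ a ∈ F, a.1) ⊆ ⋃ b ∈ Fᶜ, b.1 :=
  class_nonempty_iff_inf_not_le_sup_general D hord hun hint hDne F hFne
end

section
/- In the setting of the previous statement (P₂ the lattice of nonempty down-sets of a finite lattice P₁, D : P₂ → Set S order-reflecting and commuting with binary unions and intersections), for two nonempty up-sets F and G of P₂ the classes C(F) and C(G) are equal if and only if the following four conditions hold: (inf F) ∩ (sup G') ⊆ sup F'; inf F ⊆ (sup F') ∪ (inf G); (inf G) ∩ (sup F') ⊆ sup G'; and inf G ⊆ (sup G') ∪ (inf F), where F' = P₂ \ F, G' = P₂ \ G, inf denotes intersection over the family and sup denotes union over the family. -/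
section Aux
variable {P₁ S : Type*} [Lattice P₁] [OrderBot P₁]
variable (D : NeDownSet P₁ → Set S)

lemma botMem {t : Set P₁} (h : IsLowerSet t) (hne : t.Nonempty) : (⊥ : P₁) ∈ t := by
  obtain ⟨x, hx⟩ := hne; exact h bot_le hx

/-- Extension of `D` to all (possibly empty) subsets. -/
def Eext (t : Set P₁) : Set S := ⋃ a ∈ {a : NeDownSet P₁ | a.1 ⊆ t}, D a

lemma Eext_mono {t u : Set P₁} (h : t ⊆ u) : Eext D t ⊆ Eext D u := by
  apply Set.iUnion₂_mono' ; intro a ha; exact ⟨a, ha.trans h, subset_rfl⟩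

lemma Eext_empty : Eext D ∅ = ∅ := by
  simp only [Eext, Set.iUnion_eq_empty]
  intro a; simp only [Set.mem_setOf_eq, Set.subset_empty_iff, Set.iUnion_eq_empty]
  intro h; exact absurd h a.2.2.ne_empty

lemma Eext_eq (hord : ∀ a b : NeDownSet P₁, a.1 ⊆ b.1 ↔ D a ⊆ D b)
    {t : Set P₁} (h : IsLowerSet t) (hne : t.Nonempty) :
    Eext D t = D ⟨t, h, hne⟩ := by
  apply subset_antisymm
  · apply Set.iUnion₂_subset; intro a ha
    exact (hord a ⟨t, h, hne⟩).1 ha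
  · intro x hx
    exact Set.mem_biUnion (show (⟨t, h, hne⟩ : NeDownSet P₁) ∈ {a : NeDownSet P₁ | a.1 ⊆ t} from fun y hy => hy) hx

lemma Eext_self (hord : ∀ a b : NeDownSet P₁, a.1 ⊆ b.1 ↔ D a ⊆ D b)
    (a : NeDownSet P₁) : Eext D a.1 = D a := by
  rw [Eext_eq D hord a.2.1 a.2.2]
  exact congrArg D (Subtype.ext rfl)

lemma Eext_union (hord : ∀ a b : NeDownSet P₁, a.1 ⊆ b.1 ↔ D a ⊆ D b)
    (hun : ∀ a b c : NeDownSet P₁, c.1 = a.1 ∪ b.1 → D c = D a ∪ D b)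
    {t u : Set P₁} (ht : IsLowerSet t) (hu : IsLowerSet u) :
    Eext D (t ∪ u) = Eext D t ∪ Eext D u := by
  rcases t.eq_empty_or_nonempty with rfl | htne
  · simp [Eext_empty]
  rcases u.eq_empty_or_nonempty with rfl | hune
  · simp [Eext_empty]
  rw [Eext_eq D hord ht htne, Eext_eq D hord hu hune,
    Eext_eq D hord (ht.union hu) (htne.mono Set.subset_union_left)]
  exact hun _ _ _ rfl

lemma Eext_inter (hord : ∀ a b : NeDownSet P₁, a.1 ⊆ b.1 ↔ D a ⊆ D b)
    (hint : ∀ a b c : NeDownSet P₁, c.1 = a.1 ∩ b.1 → D c = D a ∩ D b)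
    {t u : Set P₁} (ht : IsLowerSet t) (hu : IsLowerSet u) :
    Eext D (t ∩ u) = Eext D t ∩ Eext D u := by
  rcases t.eq_empty_or_nonempty with rfl | htne
  · simp [Eext_empty]
  rcases u.eq_empty_or_nonempty with rfl | hune
  · simp [Eext_empty]
  have hne : (t ∩ u).Nonempty := ⟨⊥, botMem ht htne, botMem hu hune⟩
  rw [Eext_eq D hord ht htne, Eext_eq D hord hu hune,
    Eext_eq D hord (ht.inter hu) hne]
  exact hint _ _ _ rfl

lemma Eext_subset_iff (hord : ∀ a b : NeDownSet P₁, a.1 ⊆ b.1 ↔ D a ⊆ D b)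
    (hDne : ∀ a : NeDownSet P₁, (D a).Nonempty)
    {t u : Set P₁} (ht : IsLowerSet t) (hu : IsLowerSet u) :
    t ⊆ u ↔ Eext D t ⊆ Eext D u := by
  constructor
  · exact Eext_mono D
  · intro h
    rcases t.eq_empty_or_nonempty with rfl | htne
    · exact Set.empty_subset u
    rcases u.eq_empty_or_nonempty with rfl | hune
    · rw [Eext_eq D hord ht htne, Eext_empty] at h
      exact absurd (Set.subset_empty_iff.1 h) (hDne _).ne_empty
    · rw [Eext_eq D hord ht htne, Eext_eq D hord hu hune] at h
      exact (hord _ _).2 h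

lemma Eext_biUnion (hord : ∀ a b : NeDownSet P₁, a.1 ⊆ b.1 ↔ D a ⊆ D b)
    (hun : ∀ a b c : NeDownSet P₁, c.1 = a.1 ∪ b.1 → D c = D a ∪ D b)
    (T : Finset (NeDownSet P₁)) :
    Eext D (⋃ b ∈ T, b.1) = ⋃ b ∈ T, D b := by
  classical
  induction T using Finset.induction_on with
  | empty => simp [Eext_empty]
  | @insert a T ha ih =>
      rw [Finset.set_biUnion_insert, Finset.set_biUnion_insert,
        Eext_union D hord hun a.2.1 (isLowerSet_iUnion₂ fun b _ => b.2.1),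
        Eext_self D hord, ih]

lemma Eext_biInter (hord : ∀ a b : NeDownSet P₁, a.1 ⊆ b.1 ↔ D a ⊆ D b)
    (hint : ∀ a b c : NeDownSet P₁, c.1 = a.1 ∩ b.1 → D c = D a ∩ D b)
    (T : Finset (NeDownSet P₁)) (hT : T.Nonempty) :
    Eext D (⋂ a ∈ T, a.1) = ⋂ a ∈ T, D a := by
  classical
  induction hT using Finset.Nonempty.cons_induction with
  | singleton a => simp [Eext_self D hord]
  | cons a T ha hT ih =>
      rw [Finset.cons_eq_insert, Finset.set_biInter_insert, Finset.set_biInter_insert,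
        Eext_inter D hord hint a.2.1 (isLowerSet_iInter₂ fun b _ => b.2.1),
        Eext_self D hord, ih]

lemma set_tauto {A B C E : Set S} :
    Bᶜ ∩ A = Eᶜ ∩ C ↔ (A ∩ E ⊆ B) ∧ (A ⊆ B ∪ C) ∧ (C ∩ B ⊆ E) ∧ (C ⊆ E ∪ A) := by
  simp only [Set.ext_iff, Set.subset_def, Set.mem_inter_iff, Set.mem_union,
    Set.mem_compl_iff]
  constructor
  · intro h
    refine ⟨fun x hx => ?_, fun x hx => ?_, fun x hx => ?_, fun x hx => ?_⟩ <;>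
      have := h x <;> tauto
  · intro ⟨h1, h2, h3, h4⟩ x
    have := h1 x; have := h2 x; have := h3 x; have := h4 x
    tauto

end Aux

lemma biInter_toFinset {α β : Type*} (T : Set α) (hT : T.Finite) (f : α → Set β) :
    ⋂ a ∈ T, f a = ⋂ a ∈ hT.toFinset, f a := by
  ext x; simp [Set.Finite.mem_toFinset]

lemma biUnion_toFinset {α β : Type*} (T : Set α) (hT : T.Finite) (f : α → Set β) :
    ⋃ a ∈ T, f a = ⋃ a ∈ hT.toFinset, f a := by
  ext x; simp [Set.Finite.mem_toFinset]

/-- Uniqueness criterion (Proposition 2): two nonempty up-sets `F, G` of the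
lattice `P₂` of nonempty down-sets of a finite lattice `P₁` determine the same
class iff the four conditions
`inf F ∩ sup G' ⊆ sup F'`, `inf F ⊆ sup F' ∪ inf G`,
`inf G ∩ sup F' ⊆ sup G'`, `inf G ⊆ sup G' ∪ inf F` hold,
where `F' = P₂ \ F`, `G' = P₂ \ G`. -/
theorem class_eq_iff_four_conditions
    {P₁ S : Type*} [Lattice P₁] [OrderBot P₁] [Fintype P₁]
    (D : NeDownSet P₁ → Set S)
    (hord : ∀ a b : NeDownSet P₁, a.1 ⊆ b.1 ↔ D a ⊆ D b)
    (hun : ∀ a b c : NeDownSet P₁, c.1 = a.1 ∪ b.1 → D c = D a ∪ D b)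
    (hint : ∀ a b c : NeDownSet P₁, c.1 = a.1 ∩ b.1 → D c = D a ∩ D b)
    (hDne : ∀ a : NeDownSet P₁, (D a).Nonempty)
    (F G : Set (NeDownSet P₁))
    (hF : IsUpperSet F) (hFne : F.Nonempty)
    (hG : IsUpperSet G) (hGne : G.Nonempty) :
    ((⋂ b ∈ Fᶜ, (D b)ᶜ) ∩ ⋂ a ∈ F, D a) =
      ((⋂ b ∈ Gᶜ, (D b)ᶜ) ∩ ⋂ a ∈ G, D a) ↔
    ((⋂ a ∈ F, a.1) ∩ (⋃ b ∈ Gᶜ, b.1) ⊆ ⋃ b ∈ Fᶜ, b.1) ∧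
    ((⋂ a ∈ F, a.1) ⊆ (⋃ b ∈ Fᶜ, b.1) ∪ ⋂ a ∈ G, a.1) ∧
    ((⋂ a ∈ G, a.1) ∩ (⋃ b ∈ Fᶜ, b.1) ⊆ ⋃ b ∈ Gᶜ, b.1) ∧
    ((⋂ a ∈ G, a.1) ⊆ (⋃ b ∈ Gᶜ, b.1) ∪ ⋂ a ∈ F, a.1) := by
  classical
  have hfinNDS : Finite (NeDownSet P₁) := by
    unfold NeDownSet; infer_instance
  have lF : IsLowerSet (⋂ a ∈ F, (a : NeDownSet P₁).1) := isLowerSet_iInter₂ fun b _ => b.2.1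
  have lG : IsLowerSet (⋂ a ∈ G, (a : NeDownSet P₁).1) := isLowerSet_iInter₂ fun b _ => b.2.1
  have lF' : IsLowerSet (⋃ b ∈ Fᶜ, (b : NeDownSet P₁).1) := isLowerSet_iUnion₂ fun b _ => b.2.1
  have lG' : IsLowerSet (⋃ b ∈ Gᶜ, (b : NeDownSet P₁).1) := isLowerSet_iUnion₂ fun b _ => b.2.1
  have eF : ⋂ a ∈ F, D a = Eext D (⋂ a ∈ F, a.1) := by
    rw [biInter_toFinset F (Set.toFinite F) D, biInter_toFinset F (Set.toFinite F) (fun a => a.1),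
      Eext_biInter D hord hint _ ((Set.Finite.toFinset_nonempty _).2 hFne)]
  have eG : ⋂ a ∈ G, D a = Eext D (⋂ a ∈ G, a.1) := by
    rw [biInter_toFinset G (Set.toFinite G) D, biInter_toFinset G (Set.toFinite G) (fun a => a.1),
      Eext_biInter D hord hint _ ((Set.Finite.toFinset_nonempty _).2 hGne)]
  have eF' : ⋂ b ∈ Fᶜ, (D b)ᶜ = (Eext D (⋃ b ∈ Fᶜ, b.1))ᶜ := by
    rw [biUnion_toFinset Fᶜ (Set.toFinite Fᶜ) (fun a => a.1),
      Eext_biUnion D hord hun, ← biUnion_toFinset Fᶜ (Set.toFinite Fᶜ) D, Set.compl_iUnion₂]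
  have eG' : ⋂ b ∈ Gᶜ, (D b)ᶜ = (Eext D (⋃ b ∈ Gᶜ, b.1))ᶜ := by
    rw [biUnion_toFinset Gᶜ (Set.toFinite Gᶜ) (fun a => a.1),
      Eext_biUnion D hord hun, ← biUnion_toFinset Gᶜ (Set.toFinite Gᶜ) D, Set.compl_iUnion₂]
  have c1 : ((⋂ a ∈ F, (a : NeDownSet P₁).1) ∩ (⋃ b ∈ Gᶜ, b.1) ⊆ ⋃ b ∈ Fᶜ, b.1) ↔
      (Eext D (⋂ a ∈ F, a.1) ∩ Eext D (⋃ b ∈ Gᶜ, b.1) ⊆ Eext D (⋃ b ∈ Fᶜ, b.1)) := by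
    rw [Eext_subset_iff D hord hDne (lF.inter lG') lF', Eext_inter D hord hint lF lG']
  have c2 : ((⋂ a ∈ F, (a : NeDownSet P₁).1) ⊆ (⋃ b ∈ Fᶜ, b.1) ∪ ⋂ a ∈ G, a.1) ↔
      (Eext D (⋂ a ∈ F, a.1) ⊆ Eext D (⋃ b ∈ Fᶜ, b.1) ∪ Eext D (⋂ a ∈ G, a.1)) := by
    rw [Eext_subset_iff D hord hDne lF (lF'.union lG), Eext_union D hord hun lF' lG]
  have c3 : ((⋂ a ∈ G, (a : NeDownSet P₁).1) ∩ (⋃ b ∈ Fᶜ, b.1) ⊆ ⋃ b ∈ Gᶜ, b.1) ↔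
      (Eext D (⋂ a ∈ G, a.1) ∩ Eext D (⋃ b ∈ Fᶜ, b.1) ⊆ Eext D (⋃ b ∈ Gᶜ, b.1)) := by
    rw [Eext_subset_iff D hord hDne (lG.inter lF') lG', Eext_inter D hord hint lG lF']
  have c4 : ((⋂ a ∈ G, (a : NeDownSet P₁).1) ⊆ (⋃ b ∈ Gᶜ, b.1) ∪ ⋂ a ∈ F, a.1) ↔
      (Eext D (⋂ a ∈ G, a.1) ⊆ Eext D (⋃ b ∈ Gᶜ, b.1) ∪ Eext D (⋂ a ∈ F, a.1)) := by
    rw [Eext_subset_iff D hord hDne lG (lG'.union lF), Eext_union D hord hun lG' lF]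
  rw [eF, eG, eF', eG', c1, c2, c3, c4, set_tauto]
end

section
/- Let P₁ be a finite lattice and P₂ its lattice of nonempty down-sets ordered by inclusion. A nonempty up-set F of P₂ satisfies both F = {ā ∈ P₂ : ⋂F ⊆ ā} and P₂ \ F = {b̄ ∈ P₂ : b̄ ⊆ ⋃(P₂\F)} if and only if there exists ξ ∈ P₁ such that F = {ā ∈ P₂ : ξ ∈ ā}, i.e. F is the principal up-set generated by the principal down-set of ξ. -/
/-- Combinatorial core of the finest classification (Proposition 4): a nonempty
up-set `F` of the lattice `P₂` of nonempty down-sets of a finite lattice `P₁`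
satisfies `F = {ā : ⋂F ⊆ ā}` and `P₂ \ F = {b̄ : b̄ ⊆ ⋃(P₂ \ F)}` iff `F` is
the principal filter generated by a principal ideal, i.e. `F = {ā : ξ ∈ ā}`
for some `ξ ∈ P₁`. -/
theorem finest_class_iff_principal
    {P₁ : Type*} [Lattice P₁] [OrderBot P₁] [Fintype P₁]
    (F : Set (NeDownSet P₁)) (hF : IsUpperSet F) (hFne : F.Nonempty) :
    (F = {a : NeDownSet P₁ | (⋂ x ∈ F, x.1) ⊆ a.1} ∧
      Fᶜ = {b : NeDownSet P₁ | b.1 ⊆ ⋃ x ∈ Fᶜ, x.1}) ↔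
    ∃ ξ : P₁, F = {a : NeDownSet P₁ | ξ ∈ a.1} := by
  constructor
  · rintro ⟨h1, h2⟩
    -- The intersection is itself a nonempty down-set.
    have hlow : IsLowerSet (⋂ x ∈ F, x.1) := by
      apply isLowerSet_iInter₂
      exact fun x _ => x.2.1
    have hbot : ⊥ ∈ ⋂ x ∈ F, x.1 := by
      simp only [Set.mem_iInter]
      intro x _
      obtain ⟨y, hy⟩ := x.2.2
      exact x.2.1 bot_le hy
    set I : NeDownSet P₁ := ⟨⋂ x ∈ F, x.1, hlow, ⟨⊥, hbot⟩⟩ with hI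
    have hIF : I ∈ F := by
      rw [h1]; exact Set.Subset.rfl
    have hInot : ¬ I.1 ⊆ ⋃ x ∈ Fᶜ, x.1 := by
      intro hsub
      have : I ∈ Fᶜ := by rw [h2]; exact hsub
      exact this hIF
    obtain ⟨υ, hυI, hυU⟩ := Set.not_subset.mp hInot
    refine ⟨υ, ?_⟩
    ext a
    simp only [Set.mem_setOf_eq]
    constructor
    · intro haF
      have : I.1 ⊆ a.1 := by
        have := h1 ▸ haF
        exact this
      exact this hυI
    · intro hυa
      by_contra haF
      have : a ∈ Fᶜ := haF
      rw [h2] at this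
      exact hυU (Set.mem_biUnion (h2 ▸ this) hυa)
  · rintro ⟨ξ, rfl⟩
    have hIeq : (⋂ x ∈ {a : NeDownSet P₁ | ξ ∈ a.1}, x.1) = {υ : P₁ | υ ≤ ξ} := by
      apply Set.Subset.antisymm
      · intro υ hυ
        have hD : (⟨{υ : P₁ | υ ≤ ξ}, fun _ _ h hb => le_trans h hb, ⟨ξ, le_refl ξ⟩⟩ :
            NeDownSet P₁) ∈ {a : NeDownSet P₁ | ξ ∈ a.1} := le_refl ξ
        have := Set.mem_iInter₂.mp hυ _ hD
        exact this
      · intro υ hυ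
        apply Set.mem_iInter₂.mpr
        intro a ha
        exact a.2.1 hυ ha
    constructor
    · ext a
      constructor
      · intro hξ
        show (⋂ x ∈ {a : NeDownSet P₁ | ξ ∈ a.1}, x.1) ⊆ a.1
        rw [hIeq]
        intro υ hυ
        exact a.2.1 hυ hξ
      · intro hsub
        have hsub' : (⋂ x ∈ {a : NeDownSet P₁ | ξ ∈ a.1}, x.1) ⊆ a.1 := hsub
        rw [hIeq] at hsub'
        exact hsub' (le_refl ξ)
    · ext b
      constructor
      · intro hb
        exact Set.subset_biUnion_of_mem (u := fun x => x.1) hb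
      · intro hsub hξ
        have hsub' : b.1 ⊆ ⋃ x ∈ {a : NeDownSet P₁ | ξ ∈ a.1}ᶜ, x.1 := hsub
        obtain ⟨c, hc, hξc⟩ := Set.mem_iUnion₂.mp (hsub' hξ)
        exact hc hξc
end
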